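/- Let k be minimal with binomial(k, ⌊k/2⌋) ≥ ℓ. Then every good system of categories for the star with ℓ leaves and diameter 2 has membership dimension at least k, and there exists a good system with membership dimension exactly k. -/

import Mathlib

open Finset SimpleGraph

variable {V : Type*}

def catDist [DecidableEq V] (S : Finset (Finset V)) (s t : V) : ℕ :=
  (S.filter fun C => t ∈ C ∧ s ∉ C).card

def IsGoodSystem [DecidableEq V] (G : SimpleGraph V) (S : Finset (Finset V)) : Prop :=
  (∀ C ∈ S, (G.induce (C : Set V)).Connected) ∧
    ∀ s t : V, s ≠ t → ∃ u, G.Adj s u ∧ catDist S u t < catDist S s t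

def memdim [DecidableEq V] [Fintype V] (S : Finset (Finset V)) : ℕ :=
  univ.sup fun v : V => (S.filter fun C => v ∈ C).card

noncomputable def graphDiam [Fintype V] (G : SimpleGraph V) : ℕ :=
  univ.sup fun p : V × V => G.dist p.1 p.2

noncomputable def minMemdim (V : Type*) [DecidableEq V] [Fintype V] (G : SimpleGraph V) : ℕ :=
  sInf {m | ∃ S : Finset (Finset V), IsGoodSystem G S ∧ memdim S = m}

def starGraph (ℓ : ℕ) : SimpleGraph (Option (Fin ℓ)) where
  Adj a b := (a = none) ≠ (b = none)
  symm := ⟨fun _ _ h => h.symm⟩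
  loopless := ⟨fun _ h => h rfl⟩

/-! The leaves of a star can only move towards another leaf through the centre `none`, so a good
system must contain, for every ordered pair of distinct leaves `(i, j)`, a category containing
the centre and `j` but not `i`. Hence the traces of the leaves on the categories through the centre form an
antichain, and Sperner's theorem bounds their number by `binomial(m, ⌊m/2⌋)`, where `m ≤ memdim`
is the number of categories through the centre. Conversely, leaves labelled by distinct `⌊k/2⌋`-subsets
of `Fin k` give one category per coordinate (the centre and the leaves whose label contains it),
and adding the singleton leaf categories yields a good system in which every vertex lies in at
most `k` categories. -/

section CatDist

variable [DecidableEq V] {S : Finset (Finset V)} {s t : V}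

@[simp]
theorem catDist_self (S : Finset (Finset V)) (s : V) : catDist S s s = 0 := by
  simp [catDist]

theorem catDist_pos {C : Finset V} (hC : C ∈ S) (ht : t ∈ C) (hs : s ∉ C) :
    0 < catDist S s t :=
  card_pos.2 ⟨C, mem_filter.2 ⟨hC, ht, hs⟩⟩

theorem exists_mem_of_catDist_lt {u : V} (h : catDist S u t < catDist S s t) :
    ∃ C ∈ S, u ∈ C ∧ t ∈ C ∧ s ∉ C := by
  by_contra! hC
  refine h.not_ge (card_le_card fun C hCS => ?_)
  simp only [mem_filter] at hCS ⊢
  exact ⟨hCS.1, hCS.2.1, fun hu => hCS.2.2 (hC C hCS.1 hu hCS.2.1)⟩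

theorem IsGoodSystem.exists_mem_of_neighbor_unique {G : SimpleGraph V} (hS : IsGoodSystem G S)
    {c : V} (hc : ∀ u, G.Adj s u → u = c) (hst : s ≠ t) :
    ∃ C ∈ S, c ∈ C ∧ t ∈ C ∧ s ∉ C := by
  obtain ⟨u, hsu, hlt⟩ := hS.2 s t hst
  exact hc u hsu ▸ exists_mem_of_catDist_lt hlt

theorem card_filter_mem_le_memdim [Fintype V] (S : Finset (Finset V)) (v : V) :
    #(S.filter (v ∈ ·)) ≤ memdim S :=
  le_sup (f := fun v : V => #(S.filter (v ∈ ·))) (mem_univ v)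

end CatDist

theorem card_le_choose_of_not_subset {ι α : Type*} [Fintype ι] [Fintype α]
    (f : ι → Finset α) (hf : ∀ i j, i ≠ j → ¬ f i ⊆ f j) :
    Fintype.card ι ≤ (Fintype.card α).choose (Fintype.card α / 2) := by
  classical
  have hinj : Function.Injective f := fun i j hij => by
    by_contra hne
    exact hf i j hne hij.subset
  have hanti : IsAntichain (· ⊆ ·) (SetLike.coe (univ.image f)) := by
    rw [coe_image, coe_univ, Set.image_univ]
    rintro _ ⟨i, rfl⟩ _ ⟨j, rfl⟩ hne
    exact hf i j fun h => hne (congrArg f h)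
  simpa [card_image_of_injective _ hinj] using hanti.sperner

namespace starGraph

variable {ℓ : ℕ}

@[simp]
theorem adj_iff {a b : Option (Fin ℓ)} : (_root_.starGraph ℓ).Adj a b ↔ (a = none) ≠ (b = none) :=
  Iff.rfl

theorem adj_none_some (i : Fin ℓ) : (_root_.starGraph ℓ).Adj none (some i) := by
  simp

theorem induce_connected_of_none_mem {C : Finset (Option (Fin ℓ))} (hC : none ∈ C) :
    ((_root_.starGraph ℓ).induce (C : Set (Option (Fin ℓ)))).Connected := by
  have hc : none ∈ (C : Set (Option (Fin ℓ))) := hC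
  have hreach : ∀ a : (C : Set (Option (Fin ℓ))),
      ((_root_.starGraph ℓ).induce (C : Set (Option (Fin ℓ)))).Reachable a ⟨none, hc⟩ := by
    rintro ⟨_ | i, ha⟩
    · rfl
    · exact Adj.reachable (adj_none_some i).symm
  exact (connected_iff _).2 ⟨fun a b => (hreach a).trans (hreach b).symm, ⟨⟨none, hc⟩⟩⟩

theorem induce_singleton_connected (x : Option (Fin ℓ)) :
    ((_root_.starGraph ℓ).induce (({x} : Finset (Option (Fin ℓ))) : Set (Option (Fin ℓ)))).Connected := by
  rw [coe_singleton]
  exact (induce_singleton_eq_top _ x).symm ▸ connected_top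

end starGraph

theorem IsGoodSystem.starGraph_le_choose {ℓ : ℕ} {S : Finset (Finset (Option (Fin ℓ)))}
    (hS : IsGoodSystem (_root_.starGraph ℓ) S) :
    ℓ ≤ (#(S.filter (none ∈ ·))).choose (#(S.filter (none ∈ ·)) / 2) := by
  set T := S.filter (none ∈ ·)
  have key := card_le_choose_of_not_subset
    (fun (i : Fin ℓ) => univ.filter fun C : T => some i ∈ C.1) fun i j hij hsub => by
      obtain ⟨C, hCS, hc, hi, hj⟩ := hS.exists_mem_of_neighbor_unique (s := some j) (t := some i)
        (fun u hu => by simpa using hu) (by simpa using hij.symm)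
      have hCT : C ∈ T := mem_filter.2 ⟨hCS, hc⟩
      exact hj (mem_filter.1 (hsub (x := ⟨C, hCT⟩) (mem_filter.2 ⟨mem_univ _, hi⟩))).2
  simpa using key

section StarSystem

variable {ℓ : ℕ} {α : Type*} [DecidableEq α] (f : Fin ℓ → Finset α)

def starCategory (a : α) : Finset (Option (Fin ℓ)) :=
  insert none ((univ.filter fun i => a ∈ f i).map .some)

def starSystem [Fintype α] : Finset (Finset (Option (Fin ℓ))) :=
  univ.image (starCategory f) ∪ univ.image fun i => {some i}

variable {f}

@[simp]
theorem none_mem_starCategory (a : α) : none ∈ starCategory f a :=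
  mem_insert_self _ _

@[simp]
theorem some_mem_starCategory {a : α} {i : Fin ℓ} : some i ∈ starCategory f a ↔ a ∈ f i := by
  simp [starCategory]

theorem mem_starSystem [Fintype α] {C : Finset (Option (Fin ℓ))} :
    C ∈ starSystem f ↔ (∃ a, starCategory f a = C) ∨ ∃ i, {some i} = C := by
  simp [starSystem]

theorem starCategory_mem_starSystem [Fintype α] (a : α) : starCategory f a ∈ starSystem f :=
  mem_starSystem.2 (.inl ⟨a, rfl⟩)

theorem singleton_mem_starSystem [Fintype α] (i : Fin ℓ) : {some i} ∈ starSystem f :=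
  mem_starSystem.2 (.inr ⟨i, rfl⟩)

theorem catDist_starSystem_none_some_le_one [Fintype α] (j : Fin ℓ) :
    catDist (starSystem f) none (some j) ≤ 1 := by
  refine (card_le_card (t := {{some j}}) fun C hC => ?_).trans_eq (card_singleton _)
  obtain ⟨hCS, hj, hc⟩ := mem_filter.1 hC
  rcases mem_starSystem.1 hCS with ⟨a, rfl⟩ | ⟨i, rfl⟩
  · exact absurd (none_mem_starCategory a) hc
  · simp_all

theorem isGoodSystem_starSystem [Fintype α] (hf : ∀ i j, i ≠ j → ¬ f i ⊆ f j)
    (hlt : ∀ i, #(f i) < Fintype.card α) : IsGoodSystem (_root_.starGraph ℓ) (starSystem f) := by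
  refine ⟨fun C hC => ?_, ?_⟩
  · rcases mem_starSystem.1 hC with ⟨a, rfl⟩ | ⟨i, rfl⟩
    · exact starGraph.induce_connected_of_none_mem (none_mem_starCategory a)
    · exact starGraph.induce_singleton_connected _
  rintro (_ | i) (_ | j) hst
  · exact absurd rfl hst
  · refine ⟨some j, starGraph.adj_none_some j, ?_⟩
    rw [catDist_self]
    exact catDist_pos (singleton_mem_starSystem j) (mem_singleton_self _) (by simp)
  · refine ⟨none, (starGraph.adj_none_some i).symm, ?_⟩
    obtain ⟨a, ha⟩ : ∃ a, a ∉ f i := by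
      by_contra! h
      exact (hlt i).ne (by rw [eq_univ_of_forall h, card_univ])
    rw [catDist_self]
    exact catDist_pos (starCategory_mem_starSystem a) (none_mem_starCategory a)
      (by simpa using ha)
  · have hij : i ≠ j := by simpa using hst
    refine ⟨none, (starGraph.adj_none_some i).symm,
      (catDist_starSystem_none_some_le_one j).trans_lt ?_⟩
    obtain ⟨a, hja, hia⟩ := not_subset.1 (hf j i hij.symm)
    refine one_lt_card.2 ⟨{some j}, ?_, starCategory f a, ?_, ?_⟩
    · exact mem_filter.2 ⟨singleton_mem_starSystem j, mem_singleton_self _, by simpa using hij⟩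
    · exact mem_filter.2 ⟨starCategory_mem_starSystem a, by simpa using hja, by simpa using hia⟩
    · intro h
      have := none_mem_starCategory (f := f) a
      simp [← h] at this

theorem memdim_starSystem_le [Fintype α] (hlt : ∀ i, #(f i) < Fintype.card α) :
    memdim (starSystem f) ≤ Fintype.card α := by
  refine Finset.sup_le fun v _ => ?_
  rcases v with _ | i
  · refine (card_le_card (t := univ.image (starCategory f)) fun C hC => ?_).trans
      (card_image_le.trans_eq (card_univ))
    obtain ⟨hCS, hc⟩ := mem_filter.1 hC
    rcases mem_starSystem.1 hCS with ⟨a, rfl⟩ | ⟨i, rfl⟩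
    · exact mem_image_of_mem _ (mem_univ a)
    · simp at hc
  · calc #((starSystem f).filter (some i ∈ ·))
        ≤ #(insert {some i} ((f i).image (starCategory f))) := by
          refine card_le_card fun C hC => ?_
          obtain ⟨hCS, hi⟩ := mem_filter.1 hC
          rcases mem_starSystem.1 hCS with ⟨a, rfl⟩ | ⟨i', rfl⟩
          · exact mem_insert_of_mem (mem_image_of_mem _ (some_mem_starCategory.1 hi))
          · simp_all
      _ ≤ #(f i) + 1 := (card_insert_le _ _).trans (by gcongr; exact card_image_le)
      _ ≤ Fintype.card α := hlt i

end StarSystem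

theorem stmt10 (ℓ k : ℕ) (hℓ : 2 ≤ ℓ) (hk : ℓ ≤ k.choose (k / 2))
    (hmin : ∀ k' < k, k'.choose (k' / 2) < ℓ) :
    (∀ S : Finset (Finset (Option (Fin ℓ))), IsGoodSystem (_root_.starGraph ℓ) S →
        k ≤ memdim S) ∧
    ∃ S : Finset (Finset (Option (Fin ℓ))), IsGoodSystem (_root_.starGraph ℓ) S ∧ memdim S = k := by
  have hlower : ∀ S : Finset (Finset (Option (Fin ℓ))), IsGoodSystem (_root_.starGraph ℓ) S →
      k ≤ memdim S := fun S hS => by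
    refine le_trans ?_ (card_filter_mem_le_memdim S none)
    by_contra! h
    exact (hmin _ h).not_ge hS.starGraph_le_choose
  have hk0 : 0 < k := by
    by_contra! h
    simp [Nat.le_zero.1 h] at hk
    omega
  obtain ⟨e⟩ : Nonempty (Fin ℓ ↪ powersetCard (k / 2) (univ : Finset (Fin k))) :=
    Function.Embedding.nonempty_of_card_le (by simpa using hk)
  have hcard (i : Fin ℓ) : #(e i).1 = k / 2 := (mem_powersetCard.1 (e i).2).2
  have hanti (i j : Fin ℓ) (hij : i ≠ j) : ¬ (e i).1 ⊆ (e j).1 := fun hsub =>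
    hij (e.injective (Subtype.ext (eq_of_subset_of_card_le hsub (by rw [hcard, hcard]))))
  have hlt (i : Fin ℓ) : #(e i).1 < Fintype.card (Fin k) := by
    rw [hcard, Fintype.card_fin]
    omega
  have hgood := isGoodSystem_starSystem hanti hlt
  refine ⟨hlower, _, hgood, le_antisymm ?_ (hlower _ hgood)⟩
  simpa using memdim_starSystem_le hlt
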